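/- arXiv:2304.05859 — 5 statements merged into one kernel-verified Lean document; each statement's English description precedes it below -/
import Mathlib

section
/- Every tree of order n with maximum degree at most k (for k ≥ 3) has a matching of size at least (n-1)/k. -/
/-!
In a forest with at least one edge, the start `v` of a longest path is a leaf; let `u` be its
neighbour. Match `v` with `u` and delete the at most `k` edges at `u`: what remains is a forest
with maximum degree at most `k` whose matchings avoid `u` and `v`. Induction on the number of
edges gives a matching `M` with `|E| ≤ k |M|`, and a tree on `n` vertices has `n - 1` edges.
-/

namespace SimpleGraph

variable {V : Type*} {G : SimpleGraph V}

theorem IsAcyclic.exists_neighborSet_eq_singleton [Finite G.edgeSet] (hG : G.IsAcyclic)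
    {x y : V} (hxy : G.Adj x y) : ∃ u v, G.Adj u v ∧ G.neighborSet v = {u} := by
  have : Nonempty V := ⟨x⟩
  obtain ⟨v, w, p, hp, hmax⟩ := Walk.exists_isPath_forall_isPath_length_le_length G
  have hnil : ¬p.Nil := fun hnil ↦ by
    simpa [Walk.length_eq_zero_iff.mpr hnil] using hmax x y _ (Path.singleton hxy).isPath
  refine ⟨p.snd, v, (p.adj_snd hnil).symm,
    Set.eq_singleton_iff_unique_mem.mpr ⟨p.adj_snd hnil, fun u hu ↦ ?_⟩⟩
  refine hG.eq_snd_of_adj_start hp hu (by_contra fun hup ↦ ?_)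
  simpa using hmax _ _ (p.cons hu.symm) (hp.cons hup)

theorem ncard_edgeSet_deleteIncidenceSet_add_degree [Fintype V] [DecidableRel G.Adj] (u : V) :
    (G.deleteIncidenceSet u).edgeSet.ncard + G.degree u = G.edgeSet.ncard := by
  classical
  rw [edgeSet_deleteIncidenceSet, ← card_incidenceSet_eq_degree, ← Nat.card_eq_fintype_card,
    Nat.card_coe_set_eq]
  exact Set.ncard_sdiff_add_ncard_of_subset (G.incidenceSet_subset u)

theorem Subgraph.IsMatching.exists_ncard_edgeSet_eq_succ [Finite V] {u v : V}
    (huv : G.Adj u v) (hv : G.neighborSet v = {u}) {M : (G.deleteIncidenceSet u).Subgraph}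
    (hM : M.IsMatching) :
    ∃ M' : G.Subgraph, M'.IsMatching ∧ M'.edgeSet.ncard = M.edgeSet.ncard + 1 := by
  set M₀ := M.map (Hom.ofLE (G.deleteIncidenceSet_le u))
  have hM₀ : M₀.edgeSet = M.edgeSet := by simp [M₀]
  have hdisj : Disjoint M₀.support (G.subgraphOfAdj huv).support := by
    have hM₀adj : ∀ {a b}, M₀.Adj a b → G.Adj a b ∧ a ≠ u ∧ b ≠ u := fun ⟨_, _, h, ha, hb⟩ ↦
      ha ▸ hb ▸ deleteIncidenceSet_adj.mp (M.adj_sub h)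
    rw [support_subgraphOfAdj, Set.disjoint_insert_right, Set.disjoint_singleton_right]
    refine ⟨fun ⟨_, h⟩ ↦ (hM₀adj h).2.1 rfl, fun ⟨w, h⟩ ↦ ?_⟩
    obtain ⟨hvw, -, hwu⟩ := hM₀adj h
    exact hwu (hv ▸ hvw : w ∈ ({u} : Set V))
  have huvM : s(u, v) ∉ M.edgeSet := fun h ↦
    (deleteIncidenceSet_adj.mp (M.adj_sub h)).2.1 rfl
  refine ⟨M₀ ⊔ G.subgraphOfAdj huv, (hM.map_ofLE _).sup (.subgraphOfAdj huv) hdisj, ?_⟩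
  rw [Subgraph.edgeSet_sup, edgeSet_subgraphOfAdj, hM₀, Set.union_singleton,
    Set.ncard_insert_of_notMem huvM]

theorem IsAcyclic.exists_isMatching_ncard_edgeSet_le_mul [Fintype V] [DecidableRel G.Adj]
    (hG : G.IsAcyclic) {k : ℕ} (hdeg : ∀ v, G.degree v ≤ k) :
    ∃ M : G.Subgraph, M.IsMatching ∧ G.edgeSet.ncard ≤ k * M.edgeSet.ncard := by
  induction hn : G.edgeSet.ncard using Nat.strong_induction_on generalizing G with
  | _ n ih =>
  rcases G.edgeSet.eq_empty_or_nonempty with hE | ⟨e, he⟩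
  · exact ⟨⊥, fun _ h ↦ h.elim, by simp [← hn, hE]⟩
  induction e using Sym2.ind with
  | _ x y =>
  obtain ⟨u, v, huv, hv⟩ := hG.exists_neighborSet_eq_singleton he
  classical
  have hcard := G.ncard_edgeSet_deleteIncidenceSet_add_degree u
  obtain ⟨M, hM, hMcard⟩ := ih _ (by have := huv.degree_pos_left; omega)
    (hG.anti (G.deleteIncidenceSet_le u))
    (fun w ↦ (degree_le_of_le (G.deleteIncidenceSet_le u)).trans (hdeg w)) rfl
  obtain ⟨M', hM', hM'card⟩ := hM.exists_ncard_edgeSet_eq_succ huv hv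
  refine ⟨M', hM', ?_⟩
  calc n = (G.deleteIncidenceSet u).edgeSet.ncard + G.degree u := by omega
    _ ≤ k * M.edgeSet.ncard + k := add_le_add hMcard (hdeg u)
    _ = k * M'.edgeSet.ncard := by rw [hM'card, mul_add_one]

end SimpleGraph

theorem tree_matching_bound_general {V : Type*} [Fintype V] (G : SimpleGraph V)
    [DecidableRel G.Adj] (k : ℕ)
    (htree : G.IsTree) (hdeg : ∀ v : V, G.degree v ≤ k) :
    ∃ M : G.Subgraph, M.IsMatching ∧ Fintype.card V - 1 ≤ k * M.edgeSet.ncard := by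
  obtain ⟨M, hM, hle⟩ := htree.isAcyclic.exists_isMatching_ncard_edgeSet_le_mul hdeg
  have hcard := (SimpleGraph.isTree_iff_connected_and_card.mp htree).2
  rw [Nat.card_coe_set_eq, Nat.card_eq_fintype_card] at hcard
  exact ⟨M, hM, by omega⟩

/-- Every tree of order `n` with maximum degree at most `k` (`k ≥ 3`) has a
matching of size at least `(n-1)/k`. -/
theorem tree_matching_bound {V : Type*} [Fintype V] (G : SimpleGraph V)
    [DecidableRel G.Adj] (k : ℕ) (hk : 3 ≤ k)
    (htree : G.IsTree) (hdeg : ∀ v : V, G.degree v ≤ k) :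
    ∃ M : G.Subgraph, M.IsMatching ∧ Fintype.card V - 1 ≤ k * M.edgeSet.ncard :=
  tree_matching_bound_general G k htree hdeg
end

section
/- Let G be a simple graph and X ⊆ V(G) a set of vertices such that for every S ⊆ X with N(S) ≠ V(G) one has |N(S)| ≥ |S|/k, where k ≥ 1 is an integer. Then there exists a function f : X → N(X) such that for every x ∈ X, f(x) is adjacent to x, and for every y ∈ N(X), the preimage f⁻¹(y) has at most k elements. -/
/-- The neighborhood of a vertex set: all vertices having a neighbor in `S`. -/
def SimpleGraph.nbhd {V : Type*} (G : SimpleGraph V) (S : Set V) : Set V :=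
  {v | ∃ s ∈ S, G.Adj s v}

/-- If `X ⊆ V(G)` satisfies `|N(S)| ≥ |S|/k` for every `S ⊆ X` with
`N(S) ≠ V(G)`, then there is `f : X → N(X)` with `f x` adjacent to `x`
and every vertex having at most `k` preimages under `f`. -/
theorem exists_assignment_of_binding {V : Type*} [Fintype V] (G : SimpleGraph V)
    (k : ℕ) (hk : 1 ≤ k) (X : Set V)
    (hbind : ∀ S ⊆ X, G.nbhd S ≠ Set.univ → S.ncard ≤ k * (G.nbhd S).ncard) :
    ∃ f : V → V, (∀ x ∈ X, G.Adj x (f x)) ∧ (∀ x ∈ X, f x ∈ G.nbhd X) ∧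
      (∀ y : V, ({x ∈ X | f x = y} : Set V).ncard ≤ k) := by
  classical
  -- the bound holds for all S ⊆ X, including when N(S) = univ
  have hbind' : ∀ S ⊆ X, S.ncard ≤ k * (G.nbhd S).ncard := by
    intro S hS
    by_cases h : G.nbhd S = Set.univ
    · calc S.ncard ≤ (Set.univ : Set V).ncard :=
            Set.ncard_le_ncard (Set.subset_univ S) Set.finite_univ
        _ = 1 * (G.nbhd S).ncard := by rw [h, one_mul]
        _ ≤ k * (G.nbhd S).ncard := Nat.mul_le_mul_right _ hk
    · exact hbind S hS h
  -- Hall's theorem with targets V × Fin k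
  set t : X → Finset (V × Fin k) := fun x => G.neighborFinset ↑x ×ˢ Finset.univ with ht
  have hall : ∀ s : Finset X, s.card ≤ (s.biUnion t).card := by
    intro s
    have hbu : s.biUnion t = (s.biUnion fun x => G.neighborFinset ↑x) ×ˢ
        (Finset.univ : Finset (Fin k)) := by
      ext ⟨v, i⟩
      simp [ht]
    have hset : ((s.biUnion fun x => G.neighborFinset ↑x : Finset V) : Set V)
        = G.nbhd ((s.image Subtype.val : Finset V) : Set V) := by
      ext v
      simp only [Finset.coe_biUnion, Set.mem_iUnion, Finset.mem_coe,
        SimpleGraph.mem_neighborFinset, SimpleGraph.nbhd, Set.mem_setOf_eq,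
        Finset.coe_image, Set.mem_image]
      constructor
      · rintro ⟨x, hx, hadj⟩
        exact ⟨↑x, ⟨⟨x, hx, rfl⟩, hadj⟩⟩
      · rintro ⟨w, ⟨⟨x, hx, rfl⟩, hadj⟩⟩
        exact ⟨x, hx, hadj⟩
    have hcard : s.card = ((s.image Subtype.val : Finset V) : Set V).ncard := by
      rw [Set.ncard_coe_finset, Finset.card_image_of_injective _ Subtype.val_injective]
    have hsub : ((s.image Subtype.val : Finset V) : Set V) ⊆ X := by
      intro v hv
      simp only [Finset.coe_image, Set.mem_image] at hv
      obtain ⟨x, _, rfl⟩ := hv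
      exact x.2
    have := hbind' _ hsub
    rw [hbu, Finset.card_product, Finset.card_univ, Fintype.card_fin]
    rw [hcard]
    calc ((s.image Subtype.val : Finset V) : Set V).ncard
        ≤ k * (G.nbhd ((s.image Subtype.val : Finset V) : Set V)).ncard := this
      _ = (s.biUnion fun x => G.neighborFinset ↑x).card * k := by
          rw [← hset, Set.ncard_coe_finset, mul_comm]
  obtain ⟨g, hginj, hgt⟩ := (Finset.all_card_le_biUnion_card_iff_exists_injective t).mp hall
  have hadj : ∀ x : X, G.Adj ↑x (g x).1 := by
    intro x
    have := hgt x
    simp only [ht, Finset.mem_product, SimpleGraph.mem_neighborFinset] at this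
    exact this.1
  refine ⟨fun v => if h : v ∈ X then (g ⟨v, h⟩).1 else v, ?_, ?_, ?_⟩
  · intro x hx
    simpa [hx] using hadj ⟨x, hx⟩
  · intro x hx
    simp only [hx, dif_pos]
    exact ⟨x, hx, hadj ⟨x, hx⟩⟩
  · intro y
    have : Set.InjOn (fun x => if h : x ∈ X then (g ⟨x, h⟩).2 else ⟨0, hk⟩)
        {x ∈ X | (if h : x ∈ X then (g ⟨x, h⟩).1 else x) = y} := by
      rintro a ⟨ha, hay⟩ b ⟨hb, hby⟩ hab
      simp only [ha, hb, dif_pos] at hay hby hab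
      have : g ⟨a, ha⟩ = g ⟨b, hb⟩ := by
        apply Prod.ext <;> simp [hay, hby, hab]
      have := hginj this
      exact congrArg Subtype.val this
    calc ({x ∈ X | (if h : x ∈ X then (g ⟨x, h⟩).1 else x) = y} : Set V).ncard
        ≤ (Set.univ : Set (Fin k)).ncard :=
          Set.ncard_le_ncard_of_injOn _ (fun a _ => Set.mem_univ _) this Set.finite_univ
      _ = k := by rw [Set.ncard_univ, Nat.card_eq_fintype_card, Fintype.card_fin]
end

section
/- Let k ≥ 2 be an integer and let G be a simple graph containing a vertex set X with binding number bind(X) = 1/k. Then G has a matching of size at least |X|/(k+1). -/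
/-!
Hall's theorem, applied with `k` copies of every vertex, turns the binding condition into a map
`ψ` sending each `x ∈ X` to a neighbour such that every vertex is hit at most `k` times.
The edges `x ψ(x)` are then packed greedily. The edge of `x` meets the edges of at most
`1 + |ψ⁻¹(x)| + |ψ⁻¹(ψ x)|` elements of `X`. If some `u ∈ X` is not hit by `ψ`, this is at most
`k + 1` for `x = u`; otherwise `ψ` is injective on `X` and it is at most `3 ≤ k + 1` for every `x`.
Discarding these elements and recursing yields `|X| / (k + 1)` pairwise disjoint edges.
-/

open Finset

theorem Finset.exists_ncard_fiber_le_of_card_le_mul_card_biUnion {ι α : Type*} [DecidableEq α]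
    (t : ι → Finset α) {k : ℕ} (ht : ∀ s : Finset ι, #s ≤ k * #(s.biUnion t)) :
    ∃ f : ι → α, (∀ i, f i ∈ t i) ∧ ∀ a, {i | f i = a}.ncard ≤ k := by
  have hHall (s : Finset ι) : #s ≤ #(s.biUnion fun i => t i ×ˢ (univ : Finset (Fin k))) := by
    have hprod : s.biUnion (fun i => t i ×ˢ (univ : Finset (Fin k))) = s.biUnion t ×ˢ univ := by
      ext; simp
    rw [hprod, card_product, card_univ, Fintype.card_fin, mul_comm]
    exact ht s
  obtain ⟨g, hg, hgt⟩ := (all_card_le_biUnion_card_iff_exists_injective _).mp hHall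
  refine ⟨fun i => (g i).1, fun i => (mem_product.mp (hgt i)).1, fun a => ?_⟩
  calc {i | (g i).1 = a}.ncard ≤ (Set.univ : Set (Fin k)).ncard :=
        Set.ncard_le_ncard_of_injOn (fun i => (g i).2) (fun _ _ => Set.mem_univ _)
          fun i hi j hj hij => hg (Prod.ext (hi.trans hj.symm) hij)
    _ = k := by simp

section Arrows

variable {V : Type*} [DecidableEq V]

def arrowConflicts (ψ : V → V) (X : Finset V) (x : V) : Finset V :=
  {y ∈ X | ¬Disjoint ({x, ψ x} : Finset V) {y, ψ y}}

lemma card_arrowConflicts_le (ψ : V → V) (X : Finset V) (x : V) :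
    #(arrowConflicts ψ X x) ≤ 1 + #{y ∈ X | ψ y = x} + #{y ∈ X | ψ y = ψ x} := by
  have hsub : arrowConflicts ψ X x ⊆
      insert (ψ x) ({y ∈ X | ψ y = x} ∪ {y ∈ X | ψ y = ψ x}) := by
    intro y hy
    simp only [arrowConflicts, mem_filter, disjoint_insert_left, disjoint_insert_right,
      disjoint_singleton, mem_insert, mem_singleton, not_and_or, not_not] at hy
    simp only [mem_insert, mem_union, mem_filter]
    grind
  calc #(arrowConflicts ψ X x)
      ≤ #({y ∈ X | ψ y = x} ∪ {y ∈ X | ψ y = ψ x}) + 1 :=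
        (card_le_card hsub).trans (card_insert_le _ _)
    _ ≤ _ := by grw [card_union_le]; omega

variable {ψ : V → V} {X : Finset V} {k : ℕ}

lemma self_mem_arrowConflicts {x : V} (hx : x ∈ X) : x ∈ arrowConflicts ψ X x := by
  simp [arrowConflicts, hx]

lemma exists_card_arrowConflicts_le (hk : 2 ≤ k) (hX : X.Nonempty)
    (hfib : ∀ v, #{x ∈ X | ψ x = v} ≤ k) : ∃ x ∈ X, #(arrowConflicts ψ X x) ≤ k + 1 := by
  by_cases hsurj : X ⊆ X.image ψ
  · have hinj : Set.InjOn ψ X :=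
      card_image_iff.mp (card_image_le.antisymm (card_le_card hsurj))
    have hfib₁ (v : V) : #{x ∈ X | ψ x = v} ≤ 1 :=
      card_le_one.mpr fun a ha b hb => by
        simp only [mem_filter] at ha hb
        exact hinj ha.1 hb.1 (ha.2.trans hb.2.symm)
    obtain ⟨x, hx⟩ := hX
    have := card_arrowConflicts_le ψ X x
    have := hfib₁ x
    have := hfib₁ (ψ x)
    exact ⟨x, hx, by omega⟩
  · obtain ⟨u, hu, hu'⟩ := not_subset.mp hsurj
    have hempty : {x ∈ X | ψ x = u} = ∅ :=
      filter_eq_empty_iff.mpr fun x hx hxu => hu' (mem_image.mpr ⟨x, hx, hxu⟩)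
    have := card_arrowConflicts_le ψ X u
    rw [hempty, card_empty] at this
    have := hfib (ψ u)
    exact ⟨u, hu, by omega⟩

theorem exists_pairwiseDisjoint_arrows (hk : 2 ≤ k)
    (hfib : ∀ v, #{x ∈ X | ψ x = v} ≤ k) :
    ∃ S ⊆ X, (S : Set V).PairwiseDisjoint (fun x => ({x, ψ x} : Finset V)) ∧
      #X ≤ (k + 1) * #S := by
  induction X using Finset.strongInduction with
  | H X ih =>
  obtain rfl | hX := X.eq_empty_or_nonempty
  · exact ⟨∅, empty_subset _, by simp, by simp⟩
  obtain ⟨x, hx, hcard⟩ := exists_card_arrowConflicts_le hk hX hfib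
  set X' := X \ arrowConflicts ψ X x
  have hxX' : x ∉ X' := fun h => (mem_sdiff.mp h).2 (self_mem_arrowConflicts hx)
  obtain ⟨S, hSX', hS, hcardS⟩ :=
    ih X' (sdiff_ssubset (filter_subset _ _) ⟨x, self_mem_arrowConflicts hx⟩)
      fun v => (card_le_card (filter_subset_filter _ sdiff_subset)).trans (hfib v)
  refine ⟨insert x S, insert_subset hx (hSX'.trans sdiff_subset), ?_, ?_⟩
  · rw [coe_insert, Set.pairwiseDisjoint_insert]
    refine ⟨hS, fun y hy _ => ?_⟩
    obtain ⟨hyX, hy'⟩ := mem_sdiff.mp (hSX' hy)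
    simpa only [arrowConflicts, mem_filter, hyX, true_and, not_not] using hy'
  · rw [card_insert_of_notMem fun h => hxX' (hSX' h)]
    have := card_le_card_sdiff_add_card (s := X) (t := arrowConflicts ψ X x)
    nlinarith

end Arrows

namespace SimpleGraph

variable {V : Type*} [DecidableEq V] (G : SimpleGraph V)

theorem coe_biUnion_neighborFinset [G.LocallyFinite] (s : Finset V) :
    (↑(s.biUnion fun v => G.neighborFinset v) : Set V) = G.nbhd ↑s := by
  ext; simp [nbhd]

theorem card_le_mul_card_biUnion_neighborFinset [Finite V] [G.LocallyFinite] {k : ℕ} (hk : 1 ≤ k)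
    {X : Set V} (hbind : ∀ S ⊆ X, G.nbhd S ≠ Set.univ → S.ncard ≤ k * (G.nbhd S).ncard)
    {s : Finset V} (hs : ↑s ⊆ X) : #s ≤ k * #(s.biUnion fun v => G.neighborFinset v) := by
  rw [← Set.ncard_coe_finset s, ← Set.ncard_coe_finset (s.biUnion _), coe_biUnion_neighborFinset]
  by_cases huniv : G.nbhd ↑s = Set.univ
  · rw [huniv]
    exact (Set.ncard_le_ncard (Set.subset_univ _)).trans (Nat.le_mul_of_pos_left _ hk)
  · exact hbind _ hs huniv

theorem exists_adj_card_fiber_le [G.LocallyFinite] {k : ℕ} (X : Finset V)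
    (hX : ∀ s ⊆ X, #s ≤ k * #(s.biUnion fun v => G.neighborFinset v)) :
    ∃ ψ : V → V, (∀ x ∈ X, G.Adj x (ψ x)) ∧ ∀ v, #{x ∈ X | ψ x = v} ≤ k := by
  obtain ⟨f, hf, hfib⟩ := exists_ncard_fiber_le_of_card_le_mul_card_biUnion
    (fun x : X => G.neighborFinset x) (k := k) fun s => by
      have := hX (s.image Subtype.val) fun x hx => by
        obtain ⟨i, -, rfl⟩ := mem_image.mp hx
        exact i.2
      rwa [image_biUnion, card_image_of_injective _ Subtype.val_injective] at this
  refine ⟨fun v => if h : v ∈ X then f ⟨v, h⟩ else v, fun x hx => by simpa [hx] using hf ⟨x, hx⟩,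
    fun v => ?_⟩
  calc #{x ∈ X | (if h : x ∈ X then f ⟨x, h⟩ else x) = v}
      = (Subtype.val '' {i | f i = v}).ncard := by
        rw [← Set.ncard_coe_finset]
        congr 1
        ext x
        by_cases hx : x ∈ X <;> simp [hx]
    _ = {i | f i = v}.ncard := Set.ncard_image_of_injective _ Subtype.val_injective
    _ ≤ k := hfib v

theorem exists_isMatching_ncard_edgeSet_eq {ψ : V → V} (S : Finset V)
    (hadj : ∀ x ∈ S, G.Adj x (ψ x))
    (hS : (S : Set V).PairwiseDisjoint fun x => ({x, ψ x} : Finset V)) :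
    ∃ M : G.Subgraph, M.IsMatching ∧ M.edgeSet.ncard = #S := by
  have hdisj : Pairwise fun x y : S => Disjoint ({x.1, ψ x} : Set V) {y.1, ψ y} := by
    intro x y hxy
    simpa [← coe_insert, ← coe_singleton] using hS x.2 y.2 (Subtype.val_injective.ne hxy)
  refine ⟨⨆ x : S, G.subgraphOfAdj (hadj x x.2),
    Subgraph.IsMatching.iSup (fun x => .subgraphOfAdj _) (by simpa using hdisj), ?_⟩
  have hinj : Function.Injective fun x : S => s(x.1, ψ x) := by
    intro x y hxy
    by_contra hne
    have : x.1 ∈ s(y.1, ψ y) := (congrArg (x.1 ∈ ·) hxy).mp (Sym2.mem_mk_left _ _)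
    exact Set.disjoint_left.mp (hdisj hne) (Set.mem_insert _ _) (Sym2.mem_iff.mp this)
  rw [Subgraph.edgeSet_iSup]
  simp only [edgeSet_subgraphOfAdj, Set.iUnion_singleton_eq_range]
  rw [Set.ncard_range_of_injective hinj, Nat.card_eq_fintype_card, Fintype.card_coe]

end SimpleGraph

/-- If `X` is a vertex set of a graph `G` with binding number `1/k` (`k ≥ 2`
an integer), i.e. `|N(S)| ≥ |S|/k` for all `S ⊆ X` with `N(S) ≠ V(G)`,
then `G` has a matching of size at least `|X|/(k+1)`. -/
theorem matching_of_binding {V : Type*} [Fintype V] (G : SimpleGraph V)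
    (k : ℕ) (hk : 2 ≤ k) (X : Set V)
    (hbind : ∀ S ⊆ X, G.nbhd S ≠ Set.univ → S.ncard ≤ k * (G.nbhd S).ncard) :
    ∃ M : G.Subgraph, M.IsMatching ∧ X.ncard ≤ (k + 1) * M.edgeSet.ncard := by
  classical
  obtain ⟨ψ, hadj, hfib⟩ := G.exists_adj_card_fiber_le X.toFinset fun s hs =>
    G.card_le_mul_card_biUnion_neighborFinset (by omega) hbind (by simpa using hs)
  obtain ⟨S, hSX, hS, hcard⟩ := exists_pairwiseDisjoint_arrows hk hfib
  obtain ⟨M, hM, hMS⟩ := G.exists_isMatching_ncard_edgeSet_eq S (fun x hx => hadj x (hSX hx)) hS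
  exact ⟨M, hM, by rwa [hMS, Set.ncard_eq_toFinset_card']⟩
end

section
/- Let G be a forest. Then |S₁(G)| + |H₁(G)| ≤ 2ν(G), where S₁(G) is the set of isolated edges (edges whose both endpoints have degree 1) and H₁(G) is the set of vertices of degree at least 2. -/
open SimpleGraph

set_option linter.unusedSectionVars false

namespace ForestShallow

variable {V : Type*} [Fintype V]

/-- Lift a subgraph of a smaller graph to a subgraph of a bigger one. -/
def lift {G G' : SimpleGraph V} (h : G ≤ G') (M : G.Subgraph) : G'.Subgraph where
  verts := M.verts
  Adj := M.Adj
  adj_sub := fun hadj => h (M.adj_sub hadj)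
  edge_vert := fun hadj => M.edge_vert hadj
  symm := M.symm

lemma lift_isMatching {G G' : SimpleGraph V} (h : G ≤ G') {M : G.Subgraph}
    (hM : M.IsMatching) : (lift h M).IsMatching := hM

lemma lift_edgeSet {G G' : SimpleGraph V} (h : G ≤ G') (M : G.Subgraph) :
    (lift h M).edgeSet = M.edgeSet := rfl

lemma lift_support {G G' : SimpleGraph V} (h : G ≤ G') (M : G.Subgraph) :
    (lift h M).support = M.support := rfl

lemma degree_eq_of_nbhd {G₁ G₂ : SimpleGraph V} [DecidableRel G₁.Adj] [DecidableRel G₂.Adj]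
    {x : V} (h : G₁.neighborSet x = G₂.neighborSet x) : G₁.degree x = G₂.degree x := by
  rw [← card_neighborSet_eq_degree, ← card_neighborSet_eq_degree]
  exact Fintype.card_congr (Equiv.setCongr h)

lemma degree_eq_zero' {G : SimpleGraph V} [DecidableRel G.Adj] {x : V}
    (h : G.neighborSet x = ∅) : G.degree x = 0 := by
  rw [← card_neighborSet_eq_degree]
  simp [h]

lemma degree_eq_one' {G : SimpleGraph V} [DecidableRel G.Adj] {x y : V}
    (hy : G.Adj x y) (h : ∀ z, G.Adj x z → z = y) : G.degree x = 1 := by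
  have : G.neighborFinset x = {y} := by
    ext z
    simp only [mem_neighborFinset, Finset.mem_singleton]
    exact ⟨h z, fun hz => hz ▸ hy⟩
  rw [← card_neighborFinset_eq_degree, this, Finset.card_singleton]

lemma unique_nbr {G : SimpleGraph V} [DecidableRel G.Adj] {x y z : V}
    (h1 : G.degree x = 1) (hy : G.Adj x y) (hz : G.Adj x z) : z = y := by
  rw [← card_neighborFinset_eq_degree] at h1
  obtain ⟨c, hc⟩ := Finset.card_eq_one.mp h1
  have hy' : y ∈ G.neighborFinset x := (mem_neighborFinset _ _ _).mpr hy
  have hz' : z ∈ G.neighborFinset x := (mem_neighborFinset _ _ _).mpr hz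
  rw [hc, Finset.mem_singleton] at hy' hz'
  rw [hy', hz']


section Pivot
variable {V : Type*} [Fintype V]

lemma exists_pivot (G : SimpleGraph V) [DecidableRel G.Adj] (hforest : G.IsAcyclic)
    {v₀ : V} (hv₀ : 2 ≤ G.degree v₀) :
    ∃ u v w : V, G.Adj u v ∧ G.Adj v w ∧ u ≠ w ∧
      ∀ x, G.Adj v x → x ≠ w → ∀ z, G.Adj x z → z = v := by
  classical
  set L : Set ℕ := {k | ∃ (x y : V) (p : G.Walk x y), p.IsPath ∧ p.length = k} with hL
  have hbdd : BddAbove L := by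
    refine ⟨Fintype.card V, ?_⟩
    rintro k ⟨x, y, p, hp, rfl⟩
    exact hp.length_lt.le
  -- a path of length 2 exists
  have h2L : 2 ∈ L := by
    rw [← card_neighborFinset_eq_degree] at hv₀
    obtain ⟨a, ha, b, hb, hab⟩ := Finset.one_lt_card.mp hv₀
    rw [mem_neighborFinset] at ha hb
    refine ⟨a, b, Walk.cons ha.symm (Walk.cons hb Walk.nil), ?_, rfl⟩
    rw [Walk.isPath_def]
    simp [ha.ne', hb.ne, hab]
  have hkL := Nat.sSup_mem ⟨2, h2L⟩ hbdd
  have hk2 : 2 ≤ sSup L := le_csSup hbdd h2L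
  have hmax : ∀ {x y : V} (r : G.Walk x y), r.IsPath → r.length ≤ sSup L := by
    intro x y r hr
    exact le_csSup hbdd ⟨x, y, r, hr, rfl⟩
  obtain ⟨x, y, p, hp, hlen⟩ := hkL
  cases p with
  | nil => simp at hlen; omega
  | cons h₁ p₁ =>
    rename_i v₁
    cases p₁ with
    | nil => simp at hlen; omega
    | cons h₂ q =>
      rename_i v₂
      -- p = cons h₁ (cons h₂ q) : Walk x y, h₁ : Adj x v₁, h₂ : Adj v₁ v₂
      simp only [Walk.length_cons] at hlen
      have hxw : x ≠ v₂ := by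
        have hnd := hp.support_nodup
        rw [Walk.support_cons, Walk.support_cons, q.support_eq_cons] at hnd
        rw [List.nodup_cons] at hnd
        simp only [List.mem_cons] at hnd
        intro h; exact hnd.1 (Or.inr (Or.inl h))
      -- Fact A : every neighbor of x is v₁
      have FA : ∀ z, G.Adj x z → z = v₁ := by
        intro z hz
        by_cases hzs : z ∈ (Walk.cons h₁ (Walk.cons h₂ q)).support
        · have hsingle : (Walk.cons hz Walk.nil : G.Walk x z).IsPath := by
            rw [Walk.isPath_def]; simp [hz.ne]
          have huniq := hforest.path_unique
            ⟨(Walk.cons h₁ (Walk.cons h₂ q)).takeUntil z hzs, hp.takeUntil hzs⟩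
            ⟨Walk.cons hz Walk.nil, hsingle⟩
          have hval : (Walk.cons h₁ (Walk.cons h₂ q)).takeUntil z hzs = Walk.cons hz Walk.nil :=
            congrArg Subtype.val huniq
          have hspec := (Walk.cons h₁ (Walk.cons h₂ q)).take_spec hzs
          rw [hval, Walk.cons_append, Walk.nil_append] at hspec
          have hsup := congrArg Walk.support hspec
          rw [Walk.support_cons, Walk.support_cons, Walk.support_cons,
            Walk.support_eq_cons ((Walk.cons h₁ (Walk.cons h₂ q)).dropUntil z hzs)] at hsup
          simp only [List.cons.injEq] at hsup
          exact hsup.2.1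
        · exfalso
          have := hmax (Walk.cons hz.symm (Walk.cons h₁ (Walk.cons h₂ q))) (hp.cons hzs)
          simp only [Walk.length_cons] at this
          omega
      -- Fact B : neighbors of v₁ other than x, v₂ are not on the path
      have FB : ∀ z, G.Adj v₁ z → z ≠ v₂ → z ≠ x →
          z ∉ (Walk.cons h₁ (Walk.cons h₂ q)).support := by
        intro z hz hzw hzx hzs
        have h2p : (Walk.cons h₁ (Walk.cons hz Walk.nil) : G.Walk x z).IsPath := by
          rw [Walk.isPath_def]
          simp [h₁.ne, hz.ne, hzx.symm]
        have huniq := hforest.path_unique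
          ⟨(Walk.cons h₁ (Walk.cons h₂ q)).takeUntil z hzs, hp.takeUntil hzs⟩
          ⟨Walk.cons h₁ (Walk.cons hz Walk.nil), h2p⟩
        have hval : (Walk.cons h₁ (Walk.cons h₂ q)).takeUntil z hzs =
            Walk.cons h₁ (Walk.cons hz Walk.nil) := congrArg Subtype.val huniq
        have hspec := (Walk.cons h₁ (Walk.cons h₂ q)).take_spec hzs
        rw [hval, Walk.cons_append, Walk.cons_append, Walk.nil_append] at hspec
        have hsup := congrArg Walk.support hspec
        rw [Walk.support_cons, Walk.support_cons, Walk.support_cons, Walk.support_cons,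
          Walk.support_eq_cons ((Walk.cons h₁ (Walk.cons h₂ q)).dropUntil z hzs),
          q.support_eq_cons] at hsup
        simp only [List.cons.injEq] at hsup
        exact hzw hsup.2.2.1
      refine ⟨x, v₁, v₂, h₁, h₂, hxw, ?_⟩
      intro x' hvx' hx'w z hx'z
      by_cases hx'x : x' = x
      · subst hx'x; exact FA z hx'z
      · have hx's := FB x' hvx' hx'w hx'x
        by_contra hzv
        by_cases hzs : z ∈ (Walk.cons h₁ (Walk.cons h₂ q)).support
        · -- z on path : the path x → v₁ → x' → z contradicts uniqueness
          have hxz : x ≠ z := by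
            rintro rfl
            exact hvx'.ne (FA x' hx'z.symm).symm
          have hx'zne : x' ≠ z := hx'z.ne
          have hvz : v₁ ≠ z := fun h => hzv h.symm
          have hxx' : x ≠ x' := fun h => hx'x h.symm
          have h3p : (Walk.cons h₁ (Walk.cons hvx' (Walk.cons hx'z Walk.nil)) :
              G.Walk x z).IsPath := by
            rw [Walk.isPath_def]
            simp [h₁.ne, hxx', hxz, hvx'.ne, hvz, hx'zne]
          have huniq := hforest.path_unique
            ⟨(Walk.cons h₁ (Walk.cons h₂ q)).takeUntil z hzs, hp.takeUntil hzs⟩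
            ⟨Walk.cons h₁ (Walk.cons hvx' (Walk.cons hx'z Walk.nil)), h3p⟩
          have hval : (Walk.cons h₁ (Walk.cons h₂ q)).takeUntil z hzs =
              Walk.cons h₁ (Walk.cons hvx' (Walk.cons hx'z Walk.nil)) :=
            congrArg Subtype.val huniq
          have : x' ∈ ((Walk.cons h₁ (Walk.cons h₂ q)).takeUntil z hzs).support := by
            rw [hval]
            simp
          exact hx's ((Walk.cons h₁ (Walk.cons h₂ q)).support_takeUntil_subset hzs this)
        · -- z off path : extend the path to length (sSup L) + 1
          have hbase : (Walk.cons h₂ q).IsPath := hp.of_cons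
          have hx'nin : x' ∉ (Walk.cons h₂ q).support := by
            intro hmem
            exact hx's (by rw [Walk.support_cons]; exact List.mem_cons_of_mem _ hmem)
          have hstep1 : (Walk.cons hvx'.symm (Walk.cons h₂ q)).IsPath := hbase.cons hx'nin
          have hznin : z ∉ (Walk.cons hvx'.symm (Walk.cons h₂ q)).support := by
            rw [Walk.support_cons]
            intro hmem
            rcases List.mem_cons.mp hmem with h | hmem
            · exact hx'z.ne' h
            · exact hzs (by rw [Walk.support_cons]; exact List.mem_cons_of_mem _ hmem)
          have hstep2 : (Walk.cons hx'z.symm (Walk.cons hvx'.symm (Walk.cons h₂ q))).IsPath :=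
            hstep1.cons hznin
          have := hmax _ hstep2
          simp only [Walk.length_cons] at this
          omega

end Pivot
section Main
variable {V : Type*} [Fintype V] [DecidableEq V]

lemma bot_isMatching (G : SimpleGraph V) : (⊥ : G.Subgraph).IsMatching := by
  intro v hv
  simp only [Subgraph.verts_bot, Set.mem_empty_iff_false] at hv

lemma aux (n : ℕ) :
    ∀ (G : SimpleGraph V) [DecidableRel G.Adj], G.IsAcyclic → G.edgeFinset.card ≤ n →
    ∃ M : G.Subgraph, M.IsMatching ∧
      ({e : Sym2 V | e ∈ G.edgeSet ∧ ∀ v ∈ e, G.degree v = 1} : Set (Sym2 V)).ncard +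
        ({v : V | 2 ≤ G.degree v} : Set V).ncard ≤ 2 * M.edgeSet.ncard := by
  induction n with
  | zero =>
    intro G _ hforest hcard
    have hemp : G.edgeFinset = ∅ := Finset.card_eq_zero.mp (Nat.le_zero.mp hcard)
    refine ⟨⊥, bot_isMatching G, ?_⟩
    have hS : ({e : Sym2 V | e ∈ G.edgeSet ∧ ∀ v ∈ e, G.degree v = 1} : Set (Sym2 V)) = ∅ := by
      ext f
      simp only [Set.mem_setOf_eq, Set.mem_empty_iff_false, iff_false, not_and]
      intro hf
      exact absurd (mem_edgeFinset.mpr hf) (by simp [hemp])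
    have hH : ({v : V | 2 ≤ G.degree v} : Set V) = ∅ := by
      ext v
      simp only [Set.mem_setOf_eq, Set.mem_empty_iff_false, iff_false, not_le]
      by_contra h
      push_neg at h
      rw [← card_neighborFinset_eq_degree] at h
      have hpos : 0 < (G.neighborFinset v).card := by omega
      obtain ⟨w, hw⟩ := Finset.card_pos.mp hpos
      rw [mem_neighborFinset] at hw
      exact absurd (mem_edgeFinset.mpr ((mem_edgeSet G).mpr hw)) (by simp [hemp])
    simp [hS, hH]
  | succ n ih =>
    intro G instG hforest hcard
    classical
    by_cases hS : ({e : Sym2 V | e ∈ G.edgeSet ∧ ∀ v ∈ e, G.degree v = 1} :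
        Set (Sym2 V)).Nonempty
    · -- Case A : there is an isolated edge
      obtain ⟨e, heS⟩ := hS
      revert heS
      induction e using Sym2.ind with
      | _ a b =>
      rintro ⟨he, hdeg⟩
      have hab : G.Adj a b := (mem_edgeSet G).mp he
      have ha1 : G.degree a = 1 := hdeg a (Sym2.mem_mk_left a b)
      have hb1 : G.degree b = 1 := hdeg b (Sym2.mem_mk_right a b)
      set G' := G.deleteEdges {s(a, b)} with hG'
      have hle : G' ≤ G := deleteEdges_le _
      have hforest' : G'.IsAcyclic := fun v c hc => hforest (c.mapLe hle) (hc.mapLe hle)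
      have hNa : G'.neighborSet a = ∅ := by
        ext z
        simp only [mem_neighborSet, hG', deleteEdges_adj, Set.mem_singleton_iff,
          Set.mem_empty_iff_false, iff_false, not_and, not_not]
        intro hz
        rw [unique_nbr ha1 hab hz]
      have hNb : G'.neighborSet b = ∅ := by
        ext z
        simp only [mem_neighborSet, hG', deleteEdges_adj, Set.mem_singleton_iff,
          Set.mem_empty_iff_false, iff_false, not_and, not_not]
        intro hz
        rw [unique_nbr hb1 hab.symm hz, Sym2.eq_swap]
      have hNother : ∀ x, x ≠ a → x ≠ b → G'.neighborSet x = G.neighborSet x := by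
        intro x hxa hxb
        ext z
        simp only [mem_neighborSet, hG', deleteEdges_adj, Set.mem_singleton_iff,
          and_iff_left_iff_imp]
        intro _ hcon
        rw [Sym2.eq_iff] at hcon
        rcases hcon with ⟨h1, _⟩ | ⟨h1, _⟩
        · exact hxa h1
        · exact hxb h1
      have hmemab : ∀ f ∈ G.edgeSet, f ≠ s(a, b) → ∀ v ∈ f, v ≠ a ∧ v ≠ b := by
        intro f hf hfne v hv
        constructor
        · rintro rfl
          obtain ⟨z, rfl⟩ := Sym2.mem_iff_exists.mp hv
          have : z = b := unique_nbr ha1 hab ((mem_edgeSet G).mp hf)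
          exact hfne (by rw [this])
        · rintro rfl
          obtain ⟨z, rfl⟩ := Sym2.mem_iff_exists.mp hv
          have : z = a := unique_nbr hb1 hab.symm ((mem_edgeSet G).mp hf)
          exact hfne (by rw [this, Sym2.eq_swap])
      have hedgeG' : G'.edgeSet = G.edgeSet \ {s(a, b)} := by
        rw [hG', edgeSet_deleteEdges]
      have hSeq : ({e : Sym2 V | e ∈ G'.edgeSet ∧ ∀ v ∈ e, G'.degree v = 1} : Set (Sym2 V)) =
          ({e : Sym2 V | e ∈ G.edgeSet ∧ ∀ v ∈ e, G.degree v = 1} : Set (Sym2 V)) \ {s(a, b)} := by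
        ext f
        simp only [Set.mem_setOf_eq, Set.mem_diff, Set.mem_singleton_iff, hedgeG',
          Set.mem_diff, Set.mem_singleton_iff]
        constructor
        · rintro ⟨⟨hf, hfne⟩, hd⟩
          refine ⟨⟨hf, fun v hv => ?_⟩, hfne⟩
          obtain ⟨hva, hvb⟩ := hmemab f hf hfne v hv
          rw [← degree_eq_of_nbhd (hNother v hva hvb)]
          exact hd v hv
        · rintro ⟨⟨hf, hd⟩, hfne⟩
          refine ⟨⟨hf, hfne⟩, fun v hv => ?_⟩
          obtain ⟨hva, hvb⟩ := hmemab f hf hfne v hv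
          rw [degree_eq_of_nbhd (hNother v hva hvb)]
          exact hd v hv
      have hHeq : ({v : V | 2 ≤ G'.degree v} : Set V) = ({v : V | 2 ≤ G.degree v} : Set V) := by
        ext x
        by_cases hxa : x = a
        · subst hxa
          simp [Set.mem_setOf_eq, degree_eq_zero' hNa, ha1]
        · by_cases hxb : x = b
          · subst hxb
            simp [Set.mem_setOf_eq, degree_eq_zero' hNb, hb1]
          · simp only [Set.mem_setOf_eq, degree_eq_of_nbhd (hNother x hxa hxb)]
      have hcard' : G'.edgeFinset.card ≤ n := by
        have herase : G'.edgeFinset = G.edgeFinset.erase s(a, b) := by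
          ext f
          simp only [mem_edgeFinset, hedgeG', Set.mem_diff, Set.mem_singleton_iff,
            Finset.mem_erase, mem_edgeFinset]
          tauto
        rw [herase, Finset.card_erase_of_mem (mem_edgeFinset.mpr he)]
        omega
      obtain ⟨M', hM', hineq⟩ := ih G' hforest' hcard'
      have hdisj : Disjoint (lift hle M').support (G.subgraphOfAdj hab).support := by
        rw [lift_support, support_subgraphOfAdj, Set.disjoint_right]
        rintro x (rfl | rfl) hxs
        · obtain ⟨y, hxy⟩ := (Subgraph.mem_support _).mp hxs
          have : y ∈ G'.neighborSet x := M'.adj_sub hxy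
          rw [hNa] at this
          exact this
        · obtain ⟨y, hxy⟩ := (Subgraph.mem_support _).mp hxs
          have : y ∈ G'.neighborSet x := M'.adj_sub hxy
          rw [hNb] at this
          exact this
      refine ⟨lift hle M' ⊔ G.subgraphOfAdj hab,
        (lift_isMatching hle hM').sup (Subgraph.IsMatching.subgraphOfAdj hab) hdisj, ?_⟩
      have hnotin : s(a, b) ∉ M'.edgeSet := by
        intro h
        have := M'.edgeSet_subset h
        rw [hedgeG'] at this
        exact this.2 rfl
      have hcnt : (lift hle M' ⊔ G.subgraphOfAdj hab).edgeSet.ncard = M'.edgeSet.ncard + 1 := by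
        rw [Subgraph.edgeSet_sup, lift_edgeSet, edgeSet_subgraphOfAdj,
          Set.ncard_union_eq (Set.disjoint_singleton_right.mpr hnotin)
            (Set.toFinite _) (Set.toFinite _), Set.ncard_singleton]
      have h1 : ({e : Sym2 V | e ∈ G.edgeSet ∧ ∀ v ∈ e, G.degree v = 1} : Set (Sym2 V)).ncard =
          ({e : Sym2 V | e ∈ G'.edgeSet ∧ ∀ v ∈ e, G'.degree v = 1} : Set (Sym2 V)).ncard + 1 := by
        rw [hSeq]
        exact (Set.ncard_diff_singleton_add_one (by exact ⟨he, hdeg⟩) (Set.toFinite _)).symm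
      rw [hcnt, h1, ← hHeq]
      omega
    · -- no isolated edges
      by_cases hH : ({v : V | 2 ≤ G.degree v} : Set V).Nonempty
      · -- Case C : there is a vertex of degree ≥ 2
        obtain ⟨v₀, hv₀⟩ := hH
        obtain ⟨u, v, w, huv, hvw, huw, hkey⟩ := exists_pivot G hforest hv₀
        set G' := G.deleteEdges (G.incidenceSet v) with hG'
        have hle : G' ≤ G := deleteEdges_le _
        have hforest' : G'.IsAcyclic := fun x c hc => hforest (c.mapLe hle) (hc.mapLe hle)
        have hNv : G'.neighborSet v = ∅ := by
          ext z
          simp only [mem_neighborSet, hG', deleteEdges_adj, Set.mem_empty_iff_false, iff_false,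
            not_and, not_not]
          intro hz
          exact ⟨(mem_edgeSet G).mpr hz, Sym2.mem_mk_left v z⟩
        have hNu : G'.neighborSet u = ∅ := by
          ext z
          simp only [mem_neighborSet, hG', deleteEdges_adj, Set.mem_empty_iff_false, iff_false,
            not_and, not_not]
          intro hz
          have hzv : z = v := hkey u huv.symm huw z hz
          subst hzv
          exact ⟨(mem_edgeSet G).mpr hz, Sym2.mem_mk_right u z⟩
        have hNother : ∀ x, x ≠ v → ¬ G.Adj v x → G'.neighborSet x = G.neighborSet x := by
          intro x hxv hnadj
          ext z
          simp only [mem_neighborSet, hG', deleteEdges_adj, and_iff_left_iff_imp]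
          intro hxz hcon
          rcases ((Sym2.mem_iff).mp hcon.2) with h1 | h1
          · exact hxv h1.symm
          · exact hnadj (h1 ▸ hxz).symm
        have hHsub : ({x : V | 2 ≤ G.degree x} : Set V) ⊆
            ({x : V | 2 ≤ G'.degree x} : Set V) ∪ {v, w} := by
          intro x hx
          by_cases hxv : x = v
          · exact Or.inr (Or.inl hxv)
          · by_cases hxw : x = w
            · exact Or.inr (Or.inr hxw)
            · left
              by_cases hadj : G.Adj v x
              · exfalso
                have := degree_eq_one' hadj.symm (hkey x hadj hxw)
                rw [Set.mem_setOf_eq, this] at hx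
                omega
              · rw [Set.mem_setOf_eq, degree_eq_of_nbhd (hNother x hxv hadj)]
                exact hx
        have hHle : ({x : V | 2 ≤ G.degree x} : Set V).ncard ≤
            ({x : V | 2 ≤ G'.degree x} : Set V).ncard + 2 := by
          calc ({x : V | 2 ≤ G.degree x} : Set V).ncard
              ≤ (({x : V | 2 ≤ G'.degree x} : Set V) ∪ {v, w}).ncard :=
                Set.ncard_le_ncard hHsub (Set.toFinite _)
            _ ≤ ({x : V | 2 ≤ G'.degree x} : Set V).ncard + ({v, w} : Set V).ncard :=
                Set.ncard_union_le _ _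
            _ ≤ ({x : V | 2 ≤ G'.degree x} : Set V).ncard + 2 := by
                have := Set.ncard_insert_le v ({w} : Set V)
                rw [Set.ncard_singleton] at this
                omega
        have hcard' : G'.edgeFinset.card ≤ n := by
          have hss : G'.edgeFinset ⊂ G.edgeFinset := by
            rw [Finset.ssubset_iff_of_subset]
            · refine ⟨s(u, v), mem_edgeFinset.mpr ((mem_edgeSet G).mpr huv), ?_⟩
              rw [mem_edgeFinset, hG', edgeSet_deleteEdges]
              rintro ⟨-, hcon⟩
              exact hcon ⟨(mem_edgeSet G).mpr huv, Sym2.mem_mk_right u v⟩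
            · intro f hf
              rw [mem_edgeFinset, hG', edgeSet_deleteEdges] at hf
              exact mem_edgeFinset.mpr hf.1
          have := Finset.card_lt_card hss
          omega
        obtain ⟨M', hM', hineq⟩ := ih G' hforest' hcard'
        have hdisj : Disjoint (lift hle M').support (G.subgraphOfAdj huv).support := by
          rw [lift_support, support_subgraphOfAdj, Set.disjoint_right]
          rintro x (rfl | rfl) hxs
          · obtain ⟨y, hxy⟩ := (Subgraph.mem_support _).mp hxs
            have : y ∈ G'.neighborSet x := M'.adj_sub hxy
            rw [hNu] at this
            exact this
          · obtain ⟨y, hxy⟩ := (Subgraph.mem_support _).mp hxs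
            have : y ∈ G'.neighborSet x := M'.adj_sub hxy
            rw [hNv] at this
            exact this
        refine ⟨lift hle M' ⊔ G.subgraphOfAdj huv,
          (lift_isMatching hle hM').sup (Subgraph.IsMatching.subgraphOfAdj huv) hdisj, ?_⟩
        have hnotin : s(u, v) ∉ M'.edgeSet := by
          intro h
          have := M'.edgeSet_subset h
          rw [hG', edgeSet_deleteEdges] at this
          exact this.2 ⟨(mem_edgeSet G).mpr huv, Sym2.mem_mk_right u v⟩
        have hcnt : (lift hle M' ⊔ G.subgraphOfAdj huv).edgeSet.ncard = M'.edgeSet.ncard + 1 := by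
          rw [Subgraph.edgeSet_sup, lift_edgeSet, edgeSet_subgraphOfAdj,
            Set.ncard_union_eq (Set.disjoint_singleton_right.mpr hnotin)
              (Set.toFinite _) (Set.toFinite _), Set.ncard_singleton]
        have hS0 : ({e : Sym2 V | e ∈ G.edgeSet ∧ ∀ v ∈ e, G.degree v = 1} :
            Set (Sym2 V)).ncard = 0 := by
          rw [Set.not_nonempty_iff_eq_empty.mp hS, Set.ncard_empty]
        rw [hcnt, hS0]
        have hSge : 0 ≤ ({e : Sym2 V | e ∈ G'.edgeSet ∧ ∀ v ∈ e, G'.degree v = 1} :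
            Set (Sym2 V)).ncard := Nat.zero_le _
        omega
      · -- Case B : no isolated edges and no vertex of degree ≥ 2
        refine ⟨⊥, bot_isMatching G, ?_⟩
        rw [Set.not_nonempty_iff_eq_empty.mp hS, Set.not_nonempty_iff_eq_empty.mp hH]
        simp

end Main

end ForestShallow

/-- For a forest `G`, `|S₁(G)| + |H₁(G)| ≤ 2ν(G)`, where `S₁(G)` is the set of
isolated edges (both endpoints of degree 1) and `H₁(G)` is the set of vertices
of degree at least 2. -/
theorem forest_shallow_add_high_le {V : Type*} [Fintype V] (G : SimpleGraph V)
    [DecidableRel G.Adj] (hforest : G.IsAcyclic) :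
    ∃ M : G.Subgraph, M.IsMatching ∧
      ({e : Sym2 V | e ∈ G.edgeSet ∧ ∀ v ∈ e, G.degree v = 1} : Set (Sym2 V)).ncard +
        ({v : V | 2 ≤ G.degree v} : Set V).ncard ≤ 2 * M.edgeSet.ncard := by
  classical
  exact ForestShallow.aux G.edgeFinset.card G hforest le_rfl
end

section
/- In any tree, the number of non-leaf vertices is at most twice the size of a maximum matching. -/
/-!
A forest has a matching covering every vertex with two distinct neighbours: delete the edge at
a leaf `l` with neighbour `w`, match the smaller forest by induction, and add the edge `lw` if `w`
is still uncovered (`l` is isolated after the deletion, so it is uncovered). A matching covers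
at most twice as many vertices as it has edges.
-/

lemma Sym2.ncard_coe_le_two {V : Type*} (e : Sym2 V) : (e : Set V).ncard ≤ 2 := by
  induction e with
  | h a b => exact Sym2.coe_mk ▸ (Set.ncard_insert_le a {b}).trans (by simp)

namespace SimpleGraph

variable {V : Type*} {G : SimpleGraph V}

theorem IsAcyclic.exists_existsUnique_adj [Finite V] (hG : G.IsAcyclic) (hne : G ≠ ⊥) :
    ∃ l, ∃! w, G.Adj l w := by
  -- the start of a longest path is a leaf
  obtain ⟨x, y, hxy⟩ : ∃ x y, G.Adj x y := by
    simpa [eq_bot_iff_forall_not_adj] using hne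
  have : Nonempty V := ⟨x⟩
  obtain ⟨u, v, p, hp, hlongest⟩ := Walk.exists_isPath_forall_isPath_length_le_length G
  have hnil : ¬p.Nil := fun h ↦ by
    simpa [h.length_eq_zero] using hlongest _ _ _ hxy.isPath_toWalk
  refine ⟨u, p.snd, p.adj_snd hnil, fun w hw ↦ hG.eq_snd_of_adj_start hp hw ?_⟩
  by_contra hwp
  simpa using hlongest _ _ _ (hp.cons hwp (h := hw.symm))

lemma two_le_degree_iff {v : V} [Fintype (G.neighborSet v)] :
    2 ≤ G.degree v ↔ (G.neighborSet v).Nontrivial := by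
  rw [← card_neighborSet_eq_degree, ← Set.toFinset_card, Nat.succ_le_iff,
    Finset.one_lt_card_iff_nontrivial, Set.toFinset_nontrivial]

namespace Subgraph

lemma IsMatching.ncard_verts_le {M : G.Subgraph} (hM : M.IsMatching) [Finite V] :
    M.verts.ncard ≤ 2 * M.edgeSet.ncard := by
  have hE := Set.toFinite M.edgeSet
  calc M.verts.ncard = (⋃ e ∈ hE.toFinset, (e : Set V)).ncard := by
        simp [hM.verts_eq_biUnion_edgeSet]
    _ ≤ ∑ e ∈ hE.toFinset, (e : Set V).ncard := Finset.set_ncard_biUnion_le _ _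
    _ ≤ ∑ e ∈ hE.toFinset, 2 := Finset.sum_le_sum fun e _ ↦ e.ncard_coe_le_two
    _ = 2 * M.edgeSet.ncard := by simp [Set.ncard_eq_toFinset_card _ hE, mul_comm]

lemma IsMatching.sup_subgraphOfAdj {M : G.Subgraph} (hM : M.IsMatching) {v w : V}
    (hvw : G.Adj v w) (hv : v ∉ M.verts) (hw : w ∉ M.verts) :
    (M ⊔ G.subgraphOfAdj hvw).IsMatching := by
  refine hM.sup (.subgraphOfAdj hvw) ?_
  rw [hM.support_eq_verts, (IsMatching.subgraphOfAdj hvw).support_eq_verts, subgraphOfAdj_verts]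
  simp [Set.disjoint_insert_right, hv, hw]

end Subgraph

theorem IsAcyclic.exists_isMatching_nontrivial_subset_verts [Finite V] (hG : G.IsAcyclic) :
    ∃ M : G.Subgraph, M.IsMatching ∧ {v | (G.neighborSet v).Nontrivial} ⊆ M.verts := by
  induction G using WellFoundedLT.induction with | _ G ih
  rcases eq_or_ne G ⊥ with rfl | hne
  · exact ⟨⊥, fun _ h ↦ h.elim, fun v hv ↦ by simp at hv⟩
  obtain ⟨l, w, hlw, hw⟩ := hG.exists_existsUnique_adj hne
  have hle : G.deleteEdges {s(l, w)} ≤ G := deleteEdges_le _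
  obtain ⟨M', hM', hcov'⟩ := ih _ (hle.lt_of_ne (by simpa using hlw)) (hG.anti hle)
  set M := M'.map (Hom.ofLE hle)
  have hM : M.IsMatching := hM'.map_ofLE hle
  have hl : l ∉ M.verts := fun hl ↦ by
    obtain ⟨u, hu, -⟩ := hM' (by simpa [M] using hl)
    have hu := hu.adj_sub
    rw [deleteEdges_adj] at hu
    exact hu.2 (by rw [hw u hu.1]; rfl)
  have hcov : ∀ v, (G.neighborSet v).Nontrivial → v ≠ w → v ∈ M.verts := by
    intro v hv hvw
    have hvl : v ≠ l := by
      rintro rfl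
      obtain ⟨a, ha, b, hb, hab⟩ := hv
      exact hab ((hw a ha).trans (hw b hb).symm)
    have : (G.deleteEdges {s(l, w)}).neighborSet v = G.neighborSet v := by
      ext u; simp [hvl, hvw]
    simpa [M] using hcov' (by rwa [Set.mem_ofPred_eq, this])
  by_cases hwM : w ∈ M.verts
  · exact ⟨M, hM, fun v hv ↦ (eq_or_ne v w).elim (· ▸ hwM) (hcov v hv)⟩
  · refine ⟨M ⊔ G.subgraphOfAdj hlw, hM.sup_subgraphOfAdj hlw hl hwM, fun v hv ↦ ?_⟩
    rcases eq_or_ne v w with rfl | h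
    · simp
    · exact Or.inl (hcov v hv h)

end SimpleGraph

/-- In any tree, the number of non-leaf vertices is at most twice the size of a
maximum matching. -/
theorem tree_nonleaf_le_two_matching {V : Type*} [Fintype V] (G : SimpleGraph V)
    [DecidableRel G.Adj] (htree : G.IsTree) :
    ∃ M : G.Subgraph, M.IsMatching ∧
      ({v : V | 2 ≤ G.degree v} : Set V).ncard ≤ 2 * M.edgeSet.ncard := by
  obtain ⟨M, hM, hcov⟩ := htree.isAcyclic.exists_isMatching_nontrivial_subset_verts
  refine ⟨M, hM, ?_⟩
  calc ({v : V | 2 ≤ G.degree v} : Set V).ncard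
      ≤ M.verts.ncard :=
        Set.ncard_le_ncard fun v hv ↦ hcov (SimpleGraph.two_le_degree_iff.mp hv)
    _ ≤ 2 * M.edgeSet.ncard := hM.ncard_verts_le
end
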